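/- Let λ : ℕ → (0,∞) satisfy λ(n) = o(n) and lim_{n→∞} λ(n) = ∞, and fix an arbitrarily small ε > 0. Then there exist a sequence m(n) of test numbers with m(n) ≤ (3/log₂ 3)·λ(n)^{1+ε}·log₂ n·(1+o(1)), probability distributions μ_n on the set of m(n)×n binary test matrices, and decoders g_n : {0,1}^{m(n)×n} × {0,1}^{m(n)} → 2^{{1,…,n}} such that, with C_n drawn from μ_n independently of the defective set 𝒟_n of the Poisson PGT model on n subjects with parameter λ(n), and y_n the outcome vector, the error probability P(g_n(C_n, y_n) ≠ 𝒟_n) tends to 0 as n → ∞. -/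

import Mathlib

open Filter Finset

/-- `P(𝒟 = S)` in the Poisson PGT model on `n` subjects with parameter `lam`. -/
noncomputable def pgtWeight (n : ℕ) (lam : ℝ) (S : Finset (Fin n)) : ℝ :=
  (Real.exp lam / ∑ d ∈ Finset.range (n + 1), lam ^ d / d.factorial) *
    lam ^ S.card * Real.exp (-lam) * (n - S.card).factorial / n.factorial

/-- Outcome vector: test `j` is positive iff some defective participates in it. -/
def outcome {m n : ℕ} (C : Fin m → Fin n → Bool) (S : Finset (Fin n)) : Fin m → Bool :=
  fun j => decide (∃ i ∈ S, C j i = true)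

/-!
Random Bernoulli design with the COMP decoder. Put each subject into each test independently with
probability `p = 1 / (K + 1)`, where `K = ⌈λ ^ (1 + ε / 2)⌉`, and declare defective every subject
that occurs in no negative test. COMP never misses a defective; a non-defective subject `i` is
wrongly declared only if no test isolates it from `𝒟`. When `|𝒟| ≤ K` a single test does so with
probability `p (1 - p) ^ |𝒟| ≥ 1 / (e (K + 1))`, so with `m = ⌈6 (K + 1) ln n⌉` tests a union bound
over the `n` subjects bounds the failure probability by `n (1 - 1 / (3 (K + 1))) ^ m ≤ 1 / n`. The
truncated Poisson tail gives `P(|𝒟| > K) ≤ λ / (K + 1) ≤ λ ^ (-ε / 2)`. Finally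
`m = O(λ ^ (1 + ε / 2) log n)`, and the spare factor `λ ^ (ε / 2) → ∞` absorbs every constant, so
one may take `δ = 0`.
-/

section Bernoulli

variable {ι : Type*} [Fintype ι]

noncomputable def bernoulliWeight (p : ℝ) (x : ι → Bool) : ℝ :=
  ∏ i, if x i then p else 1 - p

lemma bernoulliWeight_nonneg {p : ℝ} (hp₀ : 0 ≤ p) (hp₁ : p ≤ 1) (x : ι → Bool) :
    0 ≤ bernoulliWeight p x :=
  prod_nonneg fun i _ => by split <;> linarith

variable [DecidableEq ι]

lemma sum_bernoulliWeight_mul_prod (p : ℝ) (h : ι → Bool → ℝ) :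
    ∑ x : ι → Bool, bernoulliWeight p x * ∏ i, h i (x i) =
      ∏ i, (p * h i true + (1 - p) * h i false) := by
  simp only [bernoulliWeight, ← prod_mul_distrib]
  rw [← Fintype.prod_sum fun i (b : Bool) => (if b then p else 1 - p) * h i b]
  simp

lemma sum_bernoulliWeight (p : ℝ) : ∑ x : ι → Bool, bernoulliWeight p x = 1 := by
  simpa using sum_bernoulliWeight_mul_prod p fun _ _ => 1

lemma sum_bernoulliWeight_isolated (p : ℝ) {S : Finset ι} {i₀ : ι} (hi₀ : i₀ ∉ S) :
    ∑ x : ι → Bool, bernoulliWeight p x *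
        (if x i₀ = true ∧ ∀ i ∈ S, x i = false then 1 else 0) = p * (1 - p) ^ #S := by
  have hprod : ∀ x : ι → Bool, (if x i₀ = true ∧ ∀ i ∈ S, x i = false then (1 : ℝ) else 0) =
      ∏ i, if (i = i₀ → x i = true) ∧ (i ∈ S → x i = false) then 1 else 0 := by
    intro x
    rw [prod_boole]
    congr 1
    exact propext ⟨fun h i _ => ⟨fun hi => hi ▸ h.1, h.2 i⟩,
      fun h => ⟨(h i₀ (mem_univ _)).1 rfl, fun i hi => (h i (mem_univ _)).2 hi⟩⟩
  simp_rw [hprod]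
  rw [sum_bernoulliWeight_mul_prod p fun i b =>
    if (i = i₀ → b = true) ∧ (i ∈ S → b = false) then 1 else 0]
  calc _ = ∏ i, (if i = i₀ then p else 1) * (if i ∈ S then 1 - p else 1) := by
        refine prod_congr rfl fun i _ => ?_
        by_cases h₀ : i = i₀
        · subst h₀; simp [hi₀]
        · by_cases hS : i ∈ S <;> simp [h₀, hS]
    _ = p * (1 - p) ^ #S := by
        rw [prod_mul_distrib, prod_ite_eq', prod_ite_mem, univ_inter, prod_const,
          if_pos (mem_univ _)]

end Bernoulli

lemma one_sub_mul_one_sub_pow_nonneg {p : ℝ} (hp₀ : 0 ≤ p) (hp₁ : p ≤ 1) (k : ℕ) :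
    0 ≤ 1 - p * (1 - p) ^ k :=
  sub_nonneg.2 <|
    mul_le_one₀ hp₁ (pow_nonneg (by linarith) k) (pow_le_one₀ (by linarith) (by linarith))

lemma one_sub_mul_one_sub_pow_le {p : ℝ} (hp₀ : 0 ≤ p) (hp₁ : p ≤ 1) {k K : ℕ} (hk : k ≤ K)
    (m : ℕ) : (1 - p * (1 - p) ^ k) ^ m ≤ (1 - p * (1 - p) ^ K) ^ m := by
  refine pow_le_pow_left₀ (one_sub_mul_one_sub_pow_nonneg hp₀ hp₁ k) ?_ m
  exact sub_le_sub_left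
    (mul_le_mul_of_nonneg_left (pow_le_pow_of_le_one (by linarith) (by linarith) hk) hp₀) 1

section Design

variable {m n : ℕ}

noncomputable def matrixWeight (p : ℝ) (C : Fin m → Fin n → Bool) : ℝ :=
  ∏ j, bernoulliWeight p (C j)

lemma matrixWeight_nonneg {p : ℝ} (hp₀ : 0 ≤ p) (hp₁ : p ≤ 1) (C : Fin m → Fin n → Bool) :
    0 ≤ matrixWeight p C :=
  prod_nonneg fun j _ => bernoulliWeight_nonneg hp₀ hp₁ (C j)

lemma sum_matrixWeight (p : ℝ) : ∑ C : Fin m → Fin n → Bool, matrixWeight p C = 1 := by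
  simp [matrixWeight, ← Fintype.sum_pow, sum_bernoulliWeight]

def compDecode (C : Fin m → Fin n → Bool) (y : Fin m → Bool) : Finset (Fin n) :=
  univ.filter fun i => ∀ j, C j i = true → y j = true

lemma mem_compDecode_outcome {C : Fin m → Fin n → Bool} {S : Finset (Fin n)} {i : Fin n} :
    i ∈ compDecode C (outcome C S) ↔ ∀ j, C j i = true → ∃ i' ∈ S, C j i' = true := by
  simp [compDecode, outcome]

lemma subset_compDecode_outcome (C : Fin m → Fin n → Bool) (S : Finset (Fin n)) :
    S ⊆ compDecode C (outcome C S) :=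
  fun i hi => mem_compDecode_outcome.2 fun _ hj => ⟨i, hi, hj⟩

lemma ite_compDecode_outcome_ne_le (C : Fin m → Fin n → Bool) (S : Finset (Fin n)) :
    (if compDecode C (outcome C S) ≠ S then (1 : ℝ) else 0) ≤
      ∑ i ∈ Sᶜ, if i ∈ compDecode C (outcome C S) then 1 else 0 := by
  split_ifs with h
  · obtain ⟨i, hi, hiS⟩ :=
      not_subset.1 fun hsub => h (hsub.antisymm (subset_compDecode_outcome C S))
    calc (1 : ℝ) = if i ∈ compDecode C (outcome C S) then 1 else 0 := (if_pos hi).symm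
      _ ≤ _ := single_le_sum (f := fun i => if i ∈ compDecode C (outcome C S) then (1 : ℝ) else 0)
          (fun _ _ => by split_ifs <;> norm_num) (mem_compl.2 hiS)
  · exact sum_nonneg fun _ _ => by split_ifs <;> norm_num

lemma sum_matrixWeight_mem_compDecode_outcome (p : ℝ) {S : Finset (Fin n)} {i₀ : Fin n}
    (hi₀ : i₀ ∉ S) :
    ∑ C : Fin m → Fin n → Bool, matrixWeight p C *
        (if i₀ ∈ compDecode C (outcome C S) then 1 else 0) = (1 - p * (1 - p) ^ #S) ^ m := by
  have hrow : ∑ r : Fin n → Bool, bernoulliWeight p r *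
      (if r i₀ = true → ∃ i ∈ S, r i = true then 1 else 0) = 1 - p * (1 - p) ^ #S := by
    calc _ = ∑ r : Fin n → Bool, (bernoulliWeight p r - bernoulliWeight p r *
          (if r i₀ = true ∧ ∀ i ∈ S, r i = false then 1 else 0)) := by
          refine sum_congr rfl fun r _ => ?_
          split_ifs <;> grind
      _ = 1 - p * (1 - p) ^ #S := by
          rw [sum_sub_distrib, sum_bernoulliWeight]
          congr 1
          convert sum_bernoulliWeight_isolated p hi₀
  rw [← hrow, Fintype.sum_pow]
  refine sum_congr rfl fun C _ => ?_
  simp only [matrixWeight, mem_compDecode_outcome]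
  rw [prod_mul_distrib, prod_boole]
  simp

lemma sum_matrixWeight_compDecode_ne_le {p : ℝ} (hp₀ : 0 ≤ p) (hp₁ : p ≤ 1) (S : Finset (Fin n)) :
    ∑ C : Fin m → Fin n → Bool,
        matrixWeight p C * (if compDecode C (outcome C S) ≠ S then 1 else 0) ≤
      n * (1 - p * (1 - p) ^ #S) ^ m := by
  calc _ ≤ ∑ C : Fin m → Fin n → Bool, matrixWeight p C *
          ∑ i ∈ Sᶜ, (if i ∈ compDecode C (outcome C S) then 1 else 0) :=
        sum_le_sum fun C _ => mul_le_mul_of_nonneg_left (ite_compDecode_outcome_ne_le C S)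
          (matrixWeight_nonneg hp₀ hp₁ C)
    _ = ∑ i ∈ Sᶜ, ∑ C : Fin m → Fin n → Bool, matrixWeight p C *
          (if i ∈ compDecode C (outcome C S) then 1 else 0) := by
        simp_rw [mul_sum]
        exact sum_comm
    _ = #Sᶜ * (1 - p * (1 - p) ^ #S) ^ m := by
        rw [sum_congr rfl fun i hi => sum_matrixWeight_mem_compDecode_outcome p (mem_compl.1 hi),
          sum_const, nsmul_eq_mul]
    _ ≤ n * (1 - p * (1 - p) ^ #S) ^ m := by
        have := one_sub_mul_one_sub_pow_nonneg hp₀ hp₁ #S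
        gcongr
        simpa using card_le_univ Sᶜ

lemma sum_matrixWeight_compDecode_ne_le_add_ite {p : ℝ} (hp₀ : 0 ≤ p) (hp₁ : p ≤ 1) (K : ℕ)
    (S : Finset (Fin n)) :
    ∑ C : Fin m → Fin n → Bool,
        matrixWeight p C * (if compDecode C (outcome C S) ≠ S then 1 else 0) ≤
      n * (1 - p * (1 - p) ^ K) ^ m + if K < #S then 1 else 0 := by
  have := one_sub_mul_one_sub_pow_nonneg hp₀ hp₁ K
  split_ifs with hK
  · calc _ ≤ ∑ C : Fin m → Fin n → Bool, matrixWeight p C :=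
          sum_le_sum fun C _ => mul_le_of_le_one_right (matrixWeight_nonneg hp₀ hp₁ C)
            (by split_ifs <;> norm_num)
      _ ≤ _ := by
          rw [sum_matrixWeight]
          linarith [mul_nonneg (Nat.cast_nonneg n) (pow_nonneg this m)]
  · rw [add_zero]
    exact (sum_matrixWeight_compDecode_ne_le hp₀ hp₁ S).trans <| mul_le_mul_of_nonneg_left
      (one_sub_mul_one_sub_pow_le hp₀ hp₁ (not_lt.1 hK) m) (Nat.cast_nonneg n)

end Design

section Poisson

variable {lam : ℝ}

lemma sum_range_pow_div_factorial_pos (hlam : 0 ≤ lam) (n : ℕ) :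
    0 < ∑ d ∈ range (n + 1), lam ^ d / d.factorial :=
  sum_pos' (fun d _ => by positivity) ⟨0, by simp, by simp⟩

lemma sum_range_pow_div_factorial_gt_le (hlam : 0 ≤ lam) (n K : ℕ) :
    ∑ d ∈ range (n + 1), lam ^ d / d.factorial * (if K < d then 1 else 0) ≤
      lam / (K + 1) * ∑ d ∈ range (n + 1), lam ^ d / d.factorial := by
  rw [sum_range_succ']
  simp only [Nat.not_lt_zero, if_false, mul_zero, add_zero]
  calc _ ≤ ∑ d ∈ range n, lam / (K + 1) * (lam ^ d / d.factorial) := by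
        refine sum_le_sum fun d _ => ?_
        split_ifs with h
        · have hKd : (K : ℝ) + 1 ≤ d + 1 := by exact_mod_cast h
          calc lam ^ (d + 1) / (d + 1).factorial * 1 = lam / (d + 1) * (lam ^ d / d.factorial) := by
                rw [Nat.factorial_succ, Nat.cast_mul, pow_succ]
                push_cast
                field_simp
            _ ≤ lam / (K + 1) * (lam ^ d / d.factorial) := by gcongr
        · rw [mul_zero]
          positivity
    _ ≤ lam / (K + 1) * ∑ d ∈ range (n + 1), lam ^ d / d.factorial := by
        rw [← mul_sum]
        exact mul_le_mul_of_nonneg_left (sum_le_sum_of_subset_of_nonneg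
          (range_subset_range.2 n.le_succ) fun d _ _ => by positivity) (by positivity)

lemma pgtWeight_nonneg (hlam : 0 ≤ lam) {n : ℕ} (S : Finset (Fin n)) : 0 ≤ pgtWeight n lam S := by
  have := sum_range_pow_div_factorial_pos hlam n
  unfold pgtWeight
  positivity

lemma sum_pgtWeight_mul_card (hlam : 0 ≤ lam) (n : ℕ) (f : ℕ → ℝ) :
    ∑ S : Finset (Fin n), pgtWeight n lam S * f #S =
      (∑ d ∈ range (n + 1), lam ^ d / d.factorial * f d) /
        ∑ d ∈ range (n + 1), lam ^ d / d.factorial := by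
  have hZ := (sum_range_pow_div_factorial_pos hlam n).ne'
  rw [← powerset_univ, sum_powerset, card_univ, Fintype.card_fin, sum_div]
  refine sum_congr rfl fun d hd => ?_
  have hdn : d ≤ n := Nat.lt_succ_iff.1 (mem_range.1 hd)
  have hcard : ∀ S ∈ powersetCard d (univ : Finset (Fin n)), pgtWeight n lam S * f #S =
      Real.exp lam / (∑ d ∈ range (n + 1), lam ^ d / d.factorial) * lam ^ d * Real.exp (-lam) *
        (n - d).factorial / n.factorial * f d := fun S hS => by
    simp only [pgtWeight, (mem_powersetCard.1 hS).2]
  rw [sum_congr rfl hcard, sum_const, card_powersetCard, card_univ, Fintype.card_fin,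
    nsmul_eq_mul, Nat.cast_choose ℝ hdn, Real.exp_neg]
  field_simp

lemma sum_pgtWeight (hlam : 0 ≤ lam) (n : ℕ) : ∑ S : Finset (Fin n), pgtWeight n lam S = 1 := by
  simpa [(sum_range_pow_div_factorial_pos hlam n).ne'] using
    sum_pgtWeight_mul_card hlam n fun _ => 1

lemma sum_pgtWeight_card_gt_le (hlam : 0 ≤ lam) (n K : ℕ) :
    ∑ S : Finset (Fin n), pgtWeight n lam S * (if K < #S then 1 else 0) ≤ lam / (K + 1) := by
  rw [sum_pgtWeight_mul_card hlam n fun d => if K < d then 1 else 0,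
    div_le_iff₀ (sum_range_pow_div_factorial_pos hlam n)]
  exact sum_range_pow_div_factorial_gt_le hlam n K

end Poisson

lemma sum_matrixWeight_pgtWeight_compDecode_ne_le {m n : ℕ} {p lam : ℝ} (hp₀ : 0 ≤ p) (hp₁ : p ≤ 1)
    (hlam : 0 ≤ lam) (K : ℕ) :
    ∑ C : Fin m → Fin n → Bool, ∑ S : Finset (Fin n),
        matrixWeight p C * pgtWeight n lam S * (if compDecode C (outcome C S) ≠ S then 1 else 0) ≤
      n * (1 - p * (1 - p) ^ K) ^ m + lam / (K + 1) := by
  set A := (n : ℝ) * (1 - p * (1 - p) ^ K) ^ m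
  calc _ = ∑ S : Finset (Fin n), pgtWeight n lam S * ∑ C : Fin m → Fin n → Bool,
          matrixWeight p C * (if compDecode C (outcome C S) ≠ S then 1 else 0) := by
        rw [sum_comm]
        simp_rw [mul_sum]
        exact sum_congr rfl fun S _ => sum_congr rfl fun C _ => by ring
    _ ≤ ∑ S : Finset (Fin n), pgtWeight n lam S * (A + if K < #S then 1 else 0) :=
        sum_le_sum fun S _ => mul_le_mul_of_nonneg_left
          (sum_matrixWeight_compDecode_ne_le_add_ite hp₀ hp₁ K S)
          (pgtWeight_nonneg hlam S)
    _ = A + ∑ S : Finset (Fin n), pgtWeight n lam S * (if K < #S then 1 else 0) := by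
        simp only [mul_add, sum_add_distrib, ← sum_mul, sum_pgtWeight hlam n, one_mul]
    _ ≤ A + lam / (K + 1) := add_le_add_right (sum_pgtWeight_card_gt_le hlam n K) A

lemma exp_neg_one_le_one_sub_inv_pow (K : ℕ) : Real.exp (-1) ≤ (1 - 1 / (K + 1 : ℝ)) ^ K := by
  rcases K.eq_zero_or_pos with rfl | hK
  · simp
  have hK' : (0 : ℝ) < K := by exact_mod_cast hK
  have hstep : Real.exp (-(1 / (K : ℝ))) ≤ 1 - 1 / (K + 1) :=
    calc Real.exp (-(1 / (K : ℝ))) = (Real.exp (1 / (K : ℝ)))⁻¹ := Real.exp_neg _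
      _ ≤ (1 / (K : ℝ) + 1)⁻¹ := inv_anti₀ (by positivity) (Real.add_one_le_exp _)
      _ = 1 - 1 / (K + 1) := by field_simp; ring
  calc Real.exp (-1) = Real.exp (-(1 / (K : ℝ))) ^ K := by rw [← Real.exp_nat_mul]; field_simp
    _ ≤ _ := pow_le_pow_left₀ (Real.exp_pos _).le hstep K

lemma mul_one_sub_pow_le_inv {n m : ℕ} {q : ℝ} (hn : 0 < n) (hq : q ≤ 1)
    (hqm : 2 * Real.log n ≤ q * m) : n * (1 - q) ^ m ≤ (n : ℝ)⁻¹ := by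
  have hn' : (0 : ℝ) < n := by exact_mod_cast hn
  have hpow : (1 - q) ^ m ≤ Real.exp (-(q * m)) :=
    calc (1 - q) ^ m ≤ Real.exp (-q) ^ m :=
          pow_le_pow_left₀ (sub_nonneg.2 hq) (Real.one_sub_le_exp_neg q) m
      _ = Real.exp (-(q * m)) := by rw [← Real.exp_nat_mul]; ring_nf
  calc (n : ℝ) * (1 - q) ^ m ≤ n * Real.exp (-(2 * Real.log n)) := by
        gcongr
        exact hpow.trans (Real.exp_le_exp.2 (by linarith))
    _ = (n : ℝ)⁻¹ := by
        rw [Real.exp_neg, show 2 * Real.log n = Real.log ((n : ℝ) ^ 2) by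
          rw [Real.log_pow]; norm_num, Real.exp_log (by positivity)]
        field_simp

lemma mul_one_sub_inv_mul_pow_ceil_le_inv (K : ℕ) {n : ℕ} (hn : 0 < n) :
    n * (1 - 1 / (K + 1 : ℝ) * (1 - 1 / (K + 1)) ^ K) ^ ⌈6 * ((K : ℝ) + 1) * Real.log n⌉₊ ≤
      (n : ℝ)⁻¹ := by
  have hp₁ : 1 / (K + 1 : ℝ) ≤ 1 := div_le_one_of_le₀ (by simp) (by positivity)
  refine mul_one_sub_pow_le_inv hn
    (sub_nonneg.1 (one_sub_mul_one_sub_pow_nonneg (by positivity) hp₁ K)) ?_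
  have he : (1 : ℝ) / 3 ≤ Real.exp (-1) := by
    rw [Real.exp_neg, one_div]
    exact inv_anti₀ (Real.exp_pos 1) Real.exp_one_lt_three.le
  have hlog := Real.log_natCast_nonneg n
  calc 2 * Real.log n = 1 / (K + 1 : ℝ) * (1 / 3) * (6 * ((K : ℝ) + 1) * Real.log n) := by
        field_simp; ring
    _ ≤ _ := by
        gcongr
        · exact he.trans (exp_neg_one_le_one_sub_inv_pow K)
        · exact Nat.le_ceil _

lemma div_ceil_rpow_add_one_le {lam : ℝ} (hlam : 0 < lam) (a : ℝ) :
    lam / (⌈lam ^ (1 + a)⌉₊ + 1 : ℝ) ≤ lam ^ (-a) :=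
  calc lam / (⌈lam ^ (1 + a)⌉₊ + 1 : ℝ) ≤ lam / lam ^ (1 + a) :=
        div_le_div_of_nonneg_left hlam.le (Real.rpow_pos_of_pos hlam _)
          ((Nat.le_ceil _).trans (le_add_of_nonneg_right zero_le_one))
    _ = lam ^ (-a) := by
        rw [Real.rpow_add hlam, Real.rpow_one, Real.rpow_neg hlam.le]
        field_simp

lemma ceil_six_mul_ceil_rpow_mul_log_le {lam ε : ℝ} {n : ℕ} (hε : 0 ≤ ε) (hlam : 1 ≤ lam)
    (h19 : 19 ≤ lam ^ (ε / 2)) (hn : 3 ≤ n) :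
    (⌈6 * ((⌈lam ^ ((1 : ℝ) + ε / 2)⌉₊ : ℝ) + 1) * Real.log n⌉₊ : ℝ) ≤
      3 / Real.logb 2 3 * lam ^ ((1 : ℝ) + ε) * Real.logb 2 n := by
  have hx : 1 ≤ lam ^ ((1 : ℝ) + ε / 2) := Real.one_le_rpow hlam (by positivity)
  have hL : 1 ≤ Real.log n := by
    rw [Real.le_log_iff_exp_le (by positivity)]
    exact Real.exp_one_lt_three.le.trans (by exact_mod_cast hn)
  have h₁ := Nat.ceil_lt_add_one (zero_le_one.trans hx)
  have h₂ := Nat.ceil_lt_add_one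
    (show 0 ≤ 6 * ((⌈lam ^ ((1 : ℝ) + ε / 2)⌉₊ : ℝ) + 1) * Real.log n by positivity)
  have hconst : 19 ≤ 3 / Real.log 3 * lam ^ (ε / 2) := by
    have hlog3 : Real.log 3 ≤ 3 := by
      linarith [Real.log_le_sub_one_of_pos (show (0 : ℝ) < 3 by norm_num)]
    exact h19.trans (le_mul_of_one_le_left (by positivity)
      ((one_le_div (Real.log_pos (by norm_num))).2 hlog3))
  -- with `x = lam ^ (1 + ε / 2)` and `L = log n`: `⌈6 (⌈x⌉ + 1) L⌉ < 6 (x + 2) L + 1 ≤ 19 x L`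
  calc (⌈6 * ((⌈lam ^ ((1 : ℝ) + ε / 2)⌉₊ : ℝ) + 1) * Real.log n⌉₊ : ℝ)
      ≤ 19 * (lam ^ ((1 : ℝ) + ε / 2) * Real.log n) := by nlinarith
    _ ≤ 3 / Real.log 3 * lam ^ (ε / 2) * (lam ^ ((1 : ℝ) + ε / 2) * Real.log n) := by gcongr
    _ = _ := by
        rw [show (1 : ℝ) + ε = ε / 2 + (1 + ε / 2) by ring,
          Real.rpow_add (by linarith : 0 < lam) (ε / 2)]
        simp only [Real.logb]
        have := (Real.log_pos one_lt_two).ne'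
        field_simp

theorem stmt5_general (lam : ℕ → ℝ) (hpos : ∀ n, 0 < lam n)
    (hlaminf : Tendsto lam atTop atTop)
    (ε : ℝ) (hε : 0 < ε) :
    ∃ (m : ℕ → ℕ)
      (μ : (n : ℕ) → (Fin (m n) → Fin n → Bool) → ℝ)
      (g : (n : ℕ) → (Fin (m n) → Fin n → Bool) → (Fin (m n) → Bool) → Finset (Fin n))
      (δ : ℕ → ℝ),
      (∀ n C, 0 ≤ μ n C) ∧
      (∀ n, ∑ C : Fin (m n) → Fin n → Bool, μ n C = 1) ∧
      Tendsto δ atTop (nhds 0) ∧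
      (∀ᶠ n in atTop,
        (m n : ℝ) ≤ 3 / Real.logb 2 3 * lam n ^ ((1 : ℝ) + ε) * Real.logb 2 n * (1 + δ n)) ∧
      Tendsto (fun n => ∑ C : Fin (m n) → Fin n → Bool, ∑ S : Finset (Fin n),
          μ n C * pgtWeight n (lam n) S * (if g n C (outcome C S) ≠ S then 1 else 0))
        atTop (nhds 0) := by
  set K : ℕ → ℕ := fun n => ⌈lam n ^ ((1 : ℝ) + ε / 2)⌉₊
  have hp : ∀ n, 0 ≤ 1 / ((K n : ℝ) + 1) ∧ 1 / ((K n : ℝ) + 1) ≤ 1 := fun n =>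
    ⟨by positivity, div_le_one_of_le₀ (by simp) (by positivity)⟩
  refine ⟨fun n => ⌈6 * ((K n : ℝ) + 1) * Real.log n⌉₊, fun n => matrixWeight (1 / ((K n : ℝ) + 1)),
    fun n => compDecode, fun _ => 0, fun n => matrixWeight_nonneg (hp n).1 (hp n).2,
    fun n => sum_matrixWeight _, tendsto_const_nhds, ?_, ?_⟩
  · filter_upwards [((tendsto_rpow_atTop (half_pos hε)).comp hlaminf).eventually_ge_atTop 19,
      hlaminf.eventually_ge_atTop 1, eventually_ge_atTop 3] with n h19 hlam hn
    simpa using ceil_six_mul_ceil_rpow_mul_log_le hε.le hlam h19 hn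
  · have hbound : Tendsto (fun n : ℕ => (n : ℝ)⁻¹ + lam n ^ (-(ε / 2))) atTop (nhds 0) := by
      simpa using (tendsto_inv_atTop_zero.comp tendsto_natCast_atTop_atTop).add
        ((tendsto_rpow_neg_atTop (half_pos hε)).comp hlaminf)
    refine squeeze_zero' (Eventually.of_forall fun n => ?_) ?_ hbound
    · exact sum_nonneg fun C _ => sum_nonneg fun S _ => mul_nonneg (mul_nonneg
        (matrixWeight_nonneg (hp n).1 (hp n).2 C) (pgtWeight_nonneg (hpos n).le S))
        (by split_ifs <;> norm_num)
    · filter_upwards [eventually_gt_atTop 0] with n hn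
      exact (sum_matrixWeight_pgtWeight_compDecode_ne_le (hp n).1 (hp n).2 (hpos n).le (K n)).trans
        (add_le_add (mul_one_sub_inv_mul_pow_ceil_le_inv (K n) hn)
          (div_ceil_rpow_add_one_le (hpos n) _))

theorem stmt5 (lam : ℕ → ℝ) (hpos : ∀ n, 0 < lam n)
    (hlamo : Tendsto (fun n => lam n / n) atTop (nhds 0))
    (hlaminf : Tendsto lam atTop atTop)
    (ε : ℝ) (hε : 0 < ε) :
    ∃ (m : ℕ → ℕ)
      (μ : (n : ℕ) → (Fin (m n) → Fin n → Bool) → ℝ)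
      (g : (n : ℕ) → (Fin (m n) → Fin n → Bool) → (Fin (m n) → Bool) → Finset (Fin n))
      (δ : ℕ → ℝ),
      (∀ n C, 0 ≤ μ n C) ∧
      (∀ n, ∑ C : Fin (m n) → Fin n → Bool, μ n C = 1) ∧
      Tendsto δ atTop (nhds 0) ∧
      (∀ᶠ n in atTop,
        (m n : ℝ) ≤ 3 / Real.logb 2 3 * lam n ^ ((1 : ℝ) + ε) * Real.logb 2 n * (1 + δ n)) ∧
      Tendsto (fun n => ∑ C : Fin (m n) → Fin n → Bool, ∑ S : Finset (Fin n),
          μ n C * pgtWeight n (lam n) S * (if g n C (outcome C S) ≠ S then 1 else 0))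
        atTop (nhds 0) :=
  stmt5_general lam hpos hlaminf ε hε
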